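/- Let G : ℝ² → ℝ be C¹ on a connected open set where y₁ > 0 and G ≠ 0, satisfying G·∂G/∂y₂ + y₁² y₂ = 0 and 2y₁ ∂G/∂y₁ − y₂ ∂G/∂y₂ − G = 0. Then there is a real constant α with G(y₁, y₂)² = α y₁ − y₁² y₂² on that set. -/

import Mathlib

/-!
The first equation makes `∂/∂y₂` of `(G² + y₁² y₂²) / y₁` vanish, and the second one, combined
with the first, makes `∂/∂y₁` vanish. So this first integral is locally constant, hence constant
(`= α`) on the connected open set.
-/

noncomputable def firstIntegral (G : ℝ × ℝ → ℝ) (q : ℝ × ℝ) : ℝ :=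
  (G q ^ 2 + q.1 ^ 2 * q.2 ^ 2) / q.1

theorem hasFDerivAt_firstIntegral_eq_zero {G : ℝ × ℝ → ℝ} {p : ℝ × ℝ}
    (hG : DifferentiableAt ℝ G p) (hp : p.1 ≠ 0)
    (h1 : G p * fderiv ℝ G p (0, 1) + p.1 ^ 2 * p.2 = 0)
    (h2 : 2 * p.1 * fderiv ℝ G p (1, 0) - p.2 * fderiv ℝ G p (0, 1) - G p = 0) :
    HasFDerivAt (firstIntegral G) (0 : ℝ × ℝ →L[ℝ] ℝ) p := by
  have hG' : HasFDerivAt G (fderiv ℝ G p) p := hG.hasFDerivAt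
  have hfst : HasFDerivAt Prod.fst (ContinuousLinearMap.fst ℝ ℝ ℝ) p := hasFDerivAt_fst
  have hsnd : HasFDerivAt Prod.snd (ContinuousLinearMap.snd ℝ ℝ ℝ) p := hasFDerivAt_snd
  have hH := ((hG'.pow 2).add ((hfst.pow 2).mul (hsnd.pow 2))).mul
    ((hasDerivAt_inv hp).comp_hasFDerivAt p hfst)
  refine (hH.congr_fderiv ?_).congr_of_eventuallyEq (.of_forall fun q => ?_)
  · refine ContinuousLinearMap.prod_ext (ContinuousLinearMap.ext_ring ?_)
      (ContinuousLinearMap.ext_ring ?_) <;>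
    simp only [Pi.add_apply, Pi.mul_apply, Function.comp_apply, ContinuousLinearMap.add_comp,
      ContinuousLinearMap.smul_comp, ContinuousLinearMap.fst_comp_inl,
      ContinuousLinearMap.snd_comp_inl, ContinuousLinearMap.fst_comp_inr,
      ContinuousLinearMap.snd_comp_inr, ContinuousLinearMap.comp_apply,
      ContinuousLinearMap.inl_apply, ContinuousLinearMap.inr_apply, ContinuousLinearMap.id_apply,
      add_apply, smul_apply, zero_apply, smul_eq_mul, smul_zero] <;>
    field_simp
    · linear_combination p.2 * h1 + G p * h2
    · linear_combination 2 * h1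
  · simp only [firstIntegral, div_eq_mul_inv, Pi.add_apply, Pi.mul_apply, Function.comp_apply]

theorem stmt6_general (S : Set (ℝ × ℝ)) (hopen : IsOpen S) (hconn : IsConnected S)
    (hpos : ∀ p ∈ S, 0 < p.1)
    (G : ℝ × ℝ → ℝ) (hG : ContDiffOn ℝ 1 G S)
    (h1 : ∀ p ∈ S, G p * fderiv ℝ G p (0, 1) + p.1^2 * p.2 = 0)
    (h2 : ∀ p ∈ S, 2 * p.1 * fderiv ℝ G p (1, 0) - p.2 * fderiv ℝ G p (0, 1) - G p = 0) :
    ∃ α : ℝ, ∀ p ∈ S, (G p)^2 = α * p.1 - p.1^2 * p.2^2 := by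
  have hderiv : ∀ p ∈ S, HasFDerivAt (firstIntegral G) 0 p := fun p hp =>
    hasFDerivAt_firstIntegral_eq_zero
      ((hG.differentiableOn one_ne_zero).differentiableAt (hopen.mem_nhds hp))
      (hpos p hp).ne' (h1 p hp) (h2 p hp)
  obtain ⟨α, hα⟩ := hopen.exists_is_const_of_fderiv_eq_zero hconn.isPreconnected
    (fun p hp => (hderiv p hp).differentiableAt.differentiableWithinAt)
    (fun p hp => (hderiv p hp).fderiv)
  refine ⟨α, fun p hp => ?_⟩
  have hαp := hα p hp
  rw [firstIntegral, div_eq_iff (hpos p hp).ne'] at hαp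
  linear_combination hαp

/-- if G(y₁,y₂) is C¹ on a connected open set where y₁ > 0 and G ≠ 0, and
G·G_{y₂} + y₁²y₂ = 0 and 2y₁G_{y₁} − y₂G_{y₂} − G = 0, then G² = αy₁ − y₁²y₂² for some
real constant α. -/
theorem stmt6 (S : Set (ℝ × ℝ)) (hopen : IsOpen S) (hconn : IsConnected S)
    (hpos : ∀ p ∈ S, 0 < p.1)
    (G : ℝ × ℝ → ℝ) (hG : ContDiffOn ℝ 1 G S) (hne : ∀ p ∈ S, G p ≠ 0)
    (h1 : ∀ p ∈ S, G p * fderiv ℝ G p (0, 1) + p.1^2 * p.2 = 0)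
    (h2 : ∀ p ∈ S, 2 * p.1 * fderiv ℝ G p (1, 0) - p.2 * fderiv ℝ G p (0, 1) - G p = 0) :
    ∃ α : ℝ, ∀ p ∈ S, (G p)^2 = α * p.1 - p.1^2 * p.2^2 :=
  stmt6_general S hopen hconn hpos G hG h1 h2
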